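/- Let J be the left Moyal ideal generated by x₁x₂ in polynomials on ℝ⁴ with coordinates (x₁,x₂,p₁,p₂), i.e. J = {f ∗_λ (x₁x₂)}. Then for any polynomials a(x₁,p₁) and b(x₂,p₂), the element h = a ∗_λ x₁ + b ∗_λ x₂ lies in the normalizer of J, i.e. (x₁x₂) ∗_λ h ∈ J. -/

import Mathlib

open MvPolynomial

noncomputable section

/-- Polynomial functions on ℝ⁴ with coordinates x₁ = X 0, x₂ = X 1, p₁ = X 2, p₂ = X 3. -/
abbrev P4 : Type := MvPolynomial (Fin 4) ℝ
/-- Doubled ring: x₁,x₂,p₁,p₂ = X 0..3 and x̃₁,x̃₂,p̃₁,p̃₂ = X 4..7. -/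
abbrev Q4 : Type := MvPolynomial (Fin 8) ℝ

def emb4a : P4 →ₐ[ℝ] Q4 := rename (fun i : Fin 4 => (⟨i.val, by omega⟩ : Fin 8))
def emb4b : P4 →ₐ[ℝ] Q4 := rename (fun i : Fin 4 => (⟨i.val + 4, by omega⟩ : Fin 8))
def diag4 : Q4 →ₐ[ℝ] P4 := aeval (fun j : Fin 8 => X (⟨j.val % 4, by omega⟩ : Fin 4))

/-- partial derivative in the j-th variable of the doubled ring, as a linear endomorphism -/
def pd4 (j : Fin 8) : Module.End ℝ Q4 := (pderiv j).toLinearMap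

/-- The bidifferential operator Σᵢ (∂_{xᵢ}∂_{p̃ᵢ} − ∂_{x̃ᵢ}∂_{pᵢ}) on the doubled ring. -/
def D4 : Module.End ℝ Q4 :=
  (pd4 0 * pd4 6 - pd4 4 * pd4 2) + (pd4 1 * pd4 7 - pd4 5 * pd4 3)

/-- The Moyal star product on polynomials in (x₁,x₂,p₁,p₂):
f ∗_λ g = exp(λ Σᵢ(∂_{xᵢ}∂_{p̃ᵢ} − ∂_{x̃ᵢ}∂_{pᵢ})) f(x,p) g(x̃,p̃)|_diag.
Since f and g are polynomials, the exponential series truncates. -/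
def moyal4 (lam : ℝ) (f g : P4) : P4 :=
  diag4 (∑ n ∈ Finset.range (f.totalDegree + g.totalDegree + 1),
    (lam ^ n / n.factorial : ℝ) • ((D4 ^ n) (emb4a f * emb4b g)))

lemma pderiv_pderiv_comm {σ : Type*} [DecidableEq σ] (i j : σ) (p : MvPolynomial σ ℝ) :
    pderiv i (pderiv j p) = pderiv j (pderiv i p) := by
  induction p using MvPolynomial.induction_on with
  | C a => simp
  | add p q hp hq => simp [hp, hq]
  | mul_X p k h => simp only [pderiv_mul, pderiv_X, Pi.single_apply, h]; split_ifs <;> simp_all [Pi.single_apply] <;> ring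

lemma inja : Function.Injective (fun i : Fin 4 => (⟨i.val, by omega⟩ : Fin 8)) :=
  fun x y hxy => by simpa [Fin.ext_iff] using hxy

lemma injb : Function.Injective (fun i : Fin 4 => (⟨i.val + 4, by omega⟩ : Fin 8)) :=
  fun x y hxy => by simpa [Fin.ext_iff] using hxy

lemma emb4a_pd (i : Fin 4) (q : P4) :
    pderiv (⟨i.val, by omega⟩ : Fin 8) (emb4a q) = emb4a (pderiv i q) := by
  have h := pderiv_rename (R := ℝ) inja i q
  exact h

lemma emb4b_pd (i : Fin 4) (q : P4) :
    pderiv (⟨i.val + 4, by omega⟩ : Fin 8) (emb4b q) = emb4b (pderiv i q) := by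
  have h := pderiv_rename (R := ℝ) injb i q
  exact h

lemma emb4a_pd_hi (j : Fin 8) (hj : 4 ≤ j.val) (q : P4) : pderiv j (emb4a q) = 0 := by
  apply pderiv_eq_zero_of_notMem_vars
  intro hmem
  obtain ⟨i, _, hi⟩ := mem_vars_rename _ _ hmem
  have := congrArg Fin.val hi
  simp at this; omega

lemma emb4b_pd_lo (j : Fin 8) (hj : j.val < 4) (q : P4) : pderiv j (emb4b q) = 0 := by
  apply pderiv_eq_zero_of_notMem_vars
  intro hmem
  obtain ⟨i, _, hi⟩ := mem_vars_rename _ _ hmem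
  have := congrArg Fin.val hi
  simp at this; omega

lemma diag4_emb4a (q : P4) : diag4 (emb4a q) = q := by
  show (diag4.comp emb4a) q = q
  rw [show diag4.comp emb4a = AlgHom.id ℝ P4 from ?_]; rfl
  apply MvPolynomial.algHom_ext
  intro i
  simp [diag4, emb4a, Fin.ext_iff, Nat.mod_eq_of_lt i.isLt]

lemma diag4_emb4b (q : P4) : diag4 (emb4b q) = q := by
  show (diag4.comp emb4b) q = q
  rw [show diag4.comp emb4b = AlgHom.id ℝ P4 from ?_]; rfl
  apply MvPolynomial.algHom_ext
  intro i
  simp [diag4, emb4b, Fin.ext_iff, Nat.add_mod_right, Nat.mod_eq_of_lt i.isLt]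

lemma pdA0 (q : P4) : pderiv (0 : Fin 8) (emb4a q) = emb4a (pderiv (0 : Fin 4) q) := emb4a_pd 0 q
lemma pdA1 (q : P4) : pderiv (1 : Fin 8) (emb4a q) = emb4a (pderiv (1 : Fin 4) q) := emb4a_pd 1 q
lemma pdA2 (q : P4) : pderiv (2 : Fin 8) (emb4a q) = emb4a (pderiv (2 : Fin 4) q) := emb4a_pd 2 q
lemma pdA3 (q : P4) : pderiv (3 : Fin 8) (emb4a q) = emb4a (pderiv (3 : Fin 4) q) := emb4a_pd 3 q
lemma pdA4 (q : P4) : pderiv (4 : Fin 8) (emb4a q) = 0 := emb4a_pd_hi 4 (by decide) q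
lemma pdA5 (q : P4) : pderiv (5 : Fin 8) (emb4a q) = 0 := emb4a_pd_hi 5 (by decide) q
lemma pdA6 (q : P4) : pderiv (6 : Fin 8) (emb4a q) = 0 := emb4a_pd_hi 6 (by decide) q
lemma pdA7 (q : P4) : pderiv (7 : Fin 8) (emb4a q) = 0 := emb4a_pd_hi 7 (by decide) q
lemma pdB0 (q : P4) : pderiv (0 : Fin 8) (emb4b q) = 0 := emb4b_pd_lo 0 (by decide) q
lemma pdB1 (q : P4) : pderiv (1 : Fin 8) (emb4b q) = 0 := emb4b_pd_lo 1 (by decide) q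
lemma pdB2 (q : P4) : pderiv (2 : Fin 8) (emb4b q) = 0 := emb4b_pd_lo 2 (by decide) q
lemma pdB3 (q : P4) : pderiv (3 : Fin 8) (emb4b q) = 0 := emb4b_pd_lo 3 (by decide) q
lemma pdB4 (q : P4) : pderiv (4 : Fin 8) (emb4b q) = emb4b (pderiv (0 : Fin 4) q) := emb4b_pd 0 q
lemma pdB5 (q : P4) : pderiv (5 : Fin 8) (emb4b q) = emb4b (pderiv (1 : Fin 4) q) := emb4b_pd 1 q
lemma pdB6 (q : P4) : pderiv (6 : Fin 8) (emb4b q) = emb4b (pderiv (2 : Fin 4) q) := emb4b_pd 2 q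
lemma pdB7 (q : P4) : pderiv (7 : Fin 8) (emb4b q) = emb4b (pderiv (3 : Fin 4) q) := emb4b_pd 3 q

lemma D4_apply (z : Q4) : D4 z = pderiv 0 (pderiv 6 z) - pderiv 4 (pderiv 2 z)
    + (pderiv 1 (pderiv 7 z) - pderiv 5 (pderiv 3 z)) := by
  simp [D4, pd4, Module.End.mul_apply]

lemma D4_emb4a (q : P4) : D4 (emb4a q) = 0 := by
  rw [D4_apply]
  simp [pdA2, pdA3, pdA4, pdA5, pdA6, pdA7]

lemma D4pow_zero (z : Q4) (m : ℕ) (h : (D4 ^ m) z = 0) {n : ℕ} (hn : m ≤ n) :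
    (D4 ^ n) z = 0 := by
  obtain ⟨k, rfl⟩ := Nat.exists_eq_add_of_le hn
  rw [add_comm, pow_add, Module.End.mul_apply, h, map_zero]

lemma moyal4_trunc (lam : ℝ) (f g : P4) (m : ℕ) (hm : m ≤ f.totalDegree + g.totalDegree + 1)
    (hz : (D4 ^ m) (emb4a f * emb4b g) = 0) :
    moyal4 lam f g =
      diag4 (∑ n ∈ Finset.range m, (lam ^ n / n.factorial : ℝ) • ((D4 ^ n) (emb4a f * emb4b g))) := by
  unfold moyal4
  congr 1
  symm
  apply Finset.sum_subset (Finset.range_subset_range.2 hm)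
  intro x hx hxm
  rw [D4pow_zero _ m hz (by simp only [Finset.mem_range, not_lt] at hxm; exact hxm), smul_zero]

lemma emb4b_X0 : emb4b (X (0 : Fin 4)) = X (4 : Fin 8) := by
  simp only [emb4b, rename_X]; congr 1

lemma emb4b_X1 : emb4b (X (1 : Fin 4)) = X (5 : Fin 8) := by
  simp only [emb4b, rename_X]; congr 1

lemma emb4a_X0 : emb4a (X (0 : Fin 4)) = X (0 : Fin 8) := by
  simp only [emb4a, rename_X]; congr 1

lemma emb4a_X1 : emb4a (X (1 : Fin 4)) = X (1 : Fin 8) := by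
  simp only [emb4a, rename_X]; congr 1

lemma diag4_X4 : diag4 (X (4 : Fin 8)) = X (0 : Fin 4) := by
  simp [diag4]

lemma diag4_X5 : diag4 (X (5 : Fin 8)) = X (1 : Fin 4) := by
  simp [diag4]

lemma star_X0 (lam : ℝ) (f : P4) :
    moyal4 lam f (X 0) = f * X 0 - lam • pderiv (2 : Fin 4) f := by
  have hz1 : D4 (emb4a f * X (4 : Fin 8)) = -(emb4a (pderiv (2 : Fin 4) f)) := by
    rw [D4_apply]
    simp [pderiv_mul, pdA2, pdA3, pdA4, pdA5, pdA6, pdA7, pderiv_X_self, pderiv_X_of_ne,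
      Pi.single_apply, pderiv_X]
  have hz2 : (D4 ^ 2) (emb4a f * emb4b (X 0)) = 0 := by
    rw [emb4b_X0, pow_succ, pow_one, Module.End.mul_apply, hz1, map_neg, D4_emb4a, neg_zero]
  rw [moyal4_trunc lam f (X 0) 2 (by rw [totalDegree_X]; omega) hz2]
  rw [Finset.sum_range_succ, Finset.sum_range_one]
  simp only [pow_zero, pow_one, Module.End.one_apply, map_add, map_smul, emb4b_X0, hz1, map_neg,
    map_mul, diag4_emb4a, diag4_X4]
  norm_num [Nat.factorial]
  module

lemma D4_FX5 (q : P4) : D4 (emb4a q * X (5 : Fin 8)) = -(emb4a (pderiv (3 : Fin 4) q)) := by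
  rw [D4_apply]
  simp [pderiv_mul, pdA2, pdA3, pdA4, pdA5, pdA6, pdA7, pderiv_X_self, pderiv_X_of_ne,
    Pi.single_apply, pderiv_X]

lemma D4_FX45 (q : P4) : D4 (emb4a q * (X (4 : Fin 8) * X 5)) =
    -(emb4a (pderiv (2 : Fin 4) q) * X 5) - emb4a (pderiv (3 : Fin 4) q) * X 4 := by
  rw [D4_apply]
  simp [pderiv_mul, pdA0, pdA1, pdA2, pdA3, pdA4, pdA5, pdA6, pdA7, pderiv_X_self,
    pderiv_X_of_ne, Pi.single_apply, pderiv_X]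
  ring

lemma D4_emb4b (q : P4) : D4 (emb4b q) = 0 := by
  rw [D4_apply]
  simp [pdB0, pdB1, pdB2, pdB3, pdB4, pdB5, pdB6, pdB7]

lemma D4_X0B (q : P4) : D4 ((X (0 : Fin 8) : Q4) * emb4b q) = emb4b (pderiv (2 : Fin 4) q) := by
  rw [D4_apply]
  simp [pderiv_mul, pdB0, pdB1, pdB2, pdB3, pdB4, pdB5, pdB6, pdB7, pderiv_X_self,
    pderiv_X_of_ne, Pi.single_apply, pderiv_X]

lemma D4_X1B (q : P4) : D4 ((X (1 : Fin 8) : Q4) * emb4b q) = emb4b (pderiv (3 : Fin 4) q) := by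
  rw [D4_apply]
  simp [pderiv_mul, pdB0, pdB1, pdB2, pdB3, pdB4, pdB5, pdB6, pdB7, pderiv_X_self,
    pderiv_X_of_ne, Pi.single_apply, pderiv_X]

lemma D4_X01B (q : P4) : D4 ((X (0 : Fin 8) * X 1 : Q4) * emb4b q) =
    X 1 * emb4b (pderiv (2 : Fin 4) q) + X 0 * emb4b (pderiv (3 : Fin 4) q) := by
  rw [D4_apply]
  simp [pderiv_mul, pdB0, pdB1, pdB2, pdB3, pdB4, pdB5, pdB6, pdB7, pderiv_X_self,
    pderiv_X_of_ne, Pi.single_apply, pderiv_X]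
  ring

lemma degX01 : ((X 0 : P4) * X 1).totalDegree = 2 := by
  have h : (X 0 : P4) * X 1 = monomial (Finsupp.single 0 1 + Finsupp.single 1 1) 1 := by
    rw [X, X, monomial_mul, one_mul]
  rw [h, totalDegree_monomial _ one_ne_zero]
  simp [Finsupp.sum_add_index', Finsupp.sum_single_index]

lemma D4_FX4 (q : P4) : D4 (emb4a q * X (4 : Fin 8)) = -(emb4a (pderiv (2 : Fin 4) q)) := by
  rw [D4_apply]
  simp [pderiv_mul, pdA2, pdA3, pdA4, pdA5, pdA6, pdA7, pderiv_X_self, pderiv_X_of_ne,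
    Pi.single_apply, pderiv_X]

lemma diag4_X0 : diag4 (X (0 : Fin 8)) = X (0 : Fin 4) := by
  simp [diag4]

lemma diag4_X1 : diag4 (X (1 : Fin 8)) = X (1 : Fin 4) := by
  simp [diag4]

lemma star_X1 (lam : ℝ) (f : P4) :
    moyal4 lam f (X 1) = f * X 1 - lam • pderiv (3 : Fin 4) f := by
  have hz2 : (D4 ^ 2) (emb4a f * emb4b (X 1)) = 0 := by
    rw [emb4b_X1, pow_succ, pow_one, Module.End.mul_apply, D4_FX5, map_neg, D4_emb4a, neg_zero]
  rw [moyal4_trunc lam f (X 1) 2 (by rw [totalDegree_X]; omega) hz2]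
  rw [Finset.sum_range_succ, Finset.sum_range_one]
  simp only [pow_zero, pow_one, Module.End.one_apply, map_add, map_smul, emb4b_X1, D4_FX5, map_neg,
    map_mul, diag4_emb4a, diag4_X5]
  norm_num [Nat.factorial]
  module

lemma star_X01 (lam : ℝ) (f : P4) :
    moyal4 lam f (X 0 * X 1) = f * (X 0 * X 1)
      - lam • (pderiv (2 : Fin 4) f * X 1 + pderiv (3 : Fin 4) f * X 0)
      + (lam ^ 2) • pderiv (2 : Fin 4) (pderiv (3 : Fin 4) f) := by
  have he : emb4b ((X 0 : P4) * X 1) = X (4 : Fin 8) * X 5 := by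
    rw [map_mul, emb4b_X0, emb4b_X1]
  have hz2 : (D4 ^ 2) (emb4a f * (X (4 : Fin 8) * X 5)) =
      emb4a (pderiv (3 : Fin 4) (pderiv (2 : Fin 4) f))
        + emb4a (pderiv (2 : Fin 4) (pderiv (3 : Fin 4) f)) := by
    rw [pow_succ, pow_one, Module.End.mul_apply, D4_FX45, map_sub, map_neg, D4_FX5, D4_FX4,
      neg_neg, sub_neg_eq_add]
  have hz3 : (D4 ^ 3) (emb4a f * emb4b (X 0 * X 1)) = 0 := by
    rw [he, pow_succ, Module.End.mul_apply]
    rw [show D4 (emb4a f * (X (4 : Fin 8) * X 5)) =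
      -(emb4a (pderiv (2 : Fin 4) f) * X 5) - emb4a (pderiv (3 : Fin 4) f) * X 4 from D4_FX45 f]
    rw [pow_succ, pow_one, Module.End.mul_apply, map_sub, map_neg, D4_FX5, D4_FX4, neg_neg,
      sub_neg_eq_add, map_add, D4_emb4a, D4_emb4a, add_zero]
  rw [moyal4_trunc lam f (X 0 * X 1) 3 (by rw [degX01]; omega) hz3]
  rw [Finset.sum_range_succ, Finset.sum_range_succ, Finset.sum_range_one]
  rw [pderiv_pderiv_comm (3 : Fin 4) (2 : Fin 4) f] at hz2
  simp only [pow_zero, pow_one, Module.End.one_apply, map_add, map_smul, he, D4_FX45, hz2,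
    map_neg, map_sub, map_mul, diag4_emb4a, diag4_X4, diag4_X5]
  norm_num [Nat.factorial]
  module

lemma star_left01 (lam : ℝ) (h : P4) :
    moyal4 lam (X 0 * X 1) h = (X 0 * X 1) * h
      + lam • (X 1 * pderiv (2 : Fin 4) h + X 0 * pderiv (3 : Fin 4) h)
      + (lam ^ 2) • pderiv (2 : Fin 4) (pderiv (3 : Fin 4) h) := by
  have he : emb4a ((X 0 : P4) * X 1) = X (0 : Fin 8) * X 1 := by
    rw [map_mul, emb4a_X0, emb4a_X1]
  have hz2 : (D4 ^ 2) ((X (0 : Fin 8) * X 1 : Q4) * emb4b h) =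
      emb4b (pderiv (3 : Fin 4) (pderiv (2 : Fin 4) h))
        + emb4b (pderiv (2 : Fin 4) (pderiv (3 : Fin 4) h)) := by
    rw [pow_succ, pow_one, Module.End.mul_apply, D4_X01B, map_add, D4_X1B, D4_X0B]
  have hz3 : (D4 ^ 3) (emb4a (X 0 * X 1) * emb4b h) = 0 := by
    rw [he, pow_succ, Module.End.mul_apply, D4_X01B, pow_succ, pow_one, Module.End.mul_apply,
      map_add, D4_X1B, D4_X0B, map_add, D4_emb4b, D4_emb4b, add_zero]
  rw [moyal4_trunc lam (X 0 * X 1) h 3 (by rw [degX01]; omega) hz3]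
  rw [Finset.sum_range_succ, Finset.sum_range_succ, Finset.sum_range_one]
  rw [pderiv_pderiv_comm (3 : Fin 4) (2 : Fin 4) h] at hz2
  simp only [pow_zero, pow_one, Module.End.one_apply, map_add, map_smul, he, D4_X01B, hz2,
    map_mul, diag4_emb4b, diag4_X0, diag4_X1]
  norm_num [Nat.factorial]
  module

/-- For a = a(x₁,p₁) and b = b(x₂,p₂), the element h = a ∗_λ x₁ + b ∗_λ x₂ lies in the
normalizer of the left Moyal ideal J = {f ∗_λ (x₁x₂)}: (x₁x₂) ∗_λ h ∈ J. -/
theorem stmt_6 (lam : ℝ) (a b : P4)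
    (ha2 : pderiv (1 : Fin 4) a = 0) (hap2 : pderiv (3 : Fin 4) a = 0)
    (hb1 : pderiv (0 : Fin 4) b = 0) (hbp1 : pderiv (2 : Fin 4) b = 0) :
    ∃ f : P4,
      moyal4 lam ((X 0 : P4) * X 1) (moyal4 lam a (X 0) + moyal4 lam b (X 1)) =
        moyal4 lam f ((X 0 : P4) * X 1) := by
  refine ⟨X 0 * a + X 1 * b + lam • (pderiv (2 : Fin 4) a + pderiv (3 : Fin 4) b), ?_⟩
  rw [star_X0, star_X1, star_left01, star_X01]
  have hc1 : pderiv (2 : Fin 4) (pderiv (3 : Fin 4) b) = 0 := by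
    rw [pderiv_pderiv_comm, hbp1, map_zero]
  have hc2 : pderiv (3 : Fin 4) (pderiv (2 : Fin 4) a) = 0 := by
    rw [pderiv_pderiv_comm, hap2, map_zero]
  have hc3 : pderiv (2 : Fin 4) (pderiv (3 : Fin 4) a) = 0 := by rw [hap2, map_zero]
  have hc4 : pderiv (3 : Fin 4) (pderiv (2 : Fin 4) b) = 0 := by rw [hbp1, map_zero]
  simp only [map_add, map_sub, map_smul, pderiv_mul, pderiv_X, Pi.single_apply, ha2, hap2, hb1,
    hbp1, hc1, hc2, hc3, hc4, smul_zero, mul_zero, zero_mul, add_zero, zero_add, mul_one,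
    sub_zero, Fin.reduceEq, if_true, if_false, ite_true, ite_false, map_zero, one_mul]
  have hc5 : pderiv (2 : Fin 4) (pderiv (3 : Fin 4) (pderiv (3 : Fin 4) b)) = 0 := by
    rw [pderiv_pderiv_comm (2 : Fin 4) (3 : Fin 4) (pderiv (3 : Fin 4) b), hc1, map_zero]
  simp only [smul_eq_C_mul, map_pow]
  simp only [pderiv_C_mul, hc5, map_add, hc1, hc2, hc3, hc4, mul_zero, add_zero, zero_add, map_zero]
  ring
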